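/- arXiv:1608.05797 — 6 statements merged into one kernel-verified Lean document; each statement's English description precedes it below -/
import Mathlib

section
/- If n and m are positive integers and p is a prime, then Φ_{np^m}(ζ_n) belongs to the ideal p·ℤ[ζ_n], where Φ_{np^m} is the (np^m)-th cyclotomic polynomial and ζ_n is a primitive n-th complex root of unity. -/
open Polynomial

lemma exp_aux {p : ℕ} (hp : 2 ≤ p) (x y : ℕ) (hxy : x ≤ y) :
    p ^ (x + 1) - p ^ x ≤ p ^ (y + 1) - p ^ y := by
  have h : ∀ k : ℕ, p ^ (k + 1) - p ^ k = p ^ k * (p - 1) := by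
    intro k
    rw [Nat.mul_sub, mul_one, ← pow_succ]
  rw [h x, h y]
  exact Nat.mul_le_mul_right _ (Nat.pow_le_pow_right (by omega) hxy)

lemma cyclo_dvd_aux (p n₀ a m : ℕ) (hp : p.Prime) (hn₀ : ¬ p ∣ n₀) (hm : 0 < m) :
    cyclotomic (p ^ a * n₀) (ZMod p) ∣ cyclotomic ((p ^ a * n₀) * p ^ m) (ZMod p) := by
  haveI : Fact p.Prime := ⟨hp⟩
  have h2 : (p ^ a * n₀) * p ^ m = p ^ (a + m) * n₀ := by ring
  have hR : cyclotomic (p ^ (a + m) * n₀) (ZMod p)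
      = cyclotomic n₀ (ZMod p) ^ (p ^ (a + m) - p ^ (a + m - 1)) :=
    cyclotomic_mul_prime_pow_eq (ZMod p) hn₀ (by omega)
  rw [h2, hR]
  have hepos : 0 < p ^ (a + m) - p ^ (a + m - 1) := by
    have := Nat.pow_lt_pow_right hp.one_lt (show a + m - 1 < a + m by omega)
    omega
  rcases Nat.eq_zero_or_pos a with rfl | ha
  · rw [pow_zero, one_mul]
    exact dvd_pow_self _ hepos.ne'
  · rw [cyclotomic_mul_prime_pow_eq (ZMod p) hn₀ ha]
    apply pow_dvd_pow
    obtain ⟨a', rfl⟩ := Nat.exists_eq_add_of_lt ha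
    rw [show 0 + a' + 1 - 1 = a' by omega, show 0 + a' + 1 = a' + 1 by omega,
      show a' + 1 + m = a' + m + 1 by omega, show a' + m + 1 - 1 = a' + m by omega]
    exact exp_aux hp.two_le a' (a' + m) (by omega)

/-- **Lemma.** If `n` and `m` are positive integers and `p` is a prime, then
`Φ_{n·p^m}(ζ_n) ∈ p·ℤ[ζ_n]`, where `ζ_n` is a primitive `n`-th complex root of
unity and `Φ_k` is the `k`-th cyclotomic polynomial. -/
theorem cyclotomic_eval_primitive_root_mem (n m p : ℕ) (hn : 0 < n) (hm : 0 < m)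
    (hp : p.Prime) (ζ : ℂ) (hζ : IsPrimitiveRoot ζ n) :
    ∃ r ∈ Algebra.adjoin ℤ ({ζ} : Set ℂ),
      Polynomial.eval ζ (Polynomial.cyclotomic (n * p ^ m) ℂ) = (p : ℂ) * r := by
  -- decompose n = p ^ a * n₀
  obtain ⟨a, n₀, hn₀, hfac⟩ : ∃ a n₀, ¬ p ∣ n₀ ∧ p ^ a * n₀ = n :=
    ⟨n.factorization p, n / p ^ n.factorization p,
      Nat.not_dvd_ordCompl hp hn.ne', Nat.ordProj_mul_ordCompl_eq_self n p⟩
  have hdvd : cyclotomic n (ZMod p) ∣ cyclotomic (n * p ^ m) (ZMod p) := by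
    rw [← hfac]; exact cyclo_dvd_aux p n₀ a m hp hn₀ hm
  obtain ⟨Q, hQ⟩ := hdvd
  obtain ⟨q, rfl⟩ := Polynomial.map_surjective (Int.castRingHom (ZMod p))
    ZMod.intCast_surjective Q
  have key : (C (p : ℤ)) ∣ (cyclotomic (n * p ^ m) ℤ - cyclotomic n ℤ * q) := by
    rw [C_dvd_iff_dvd_coeff]
    intro i
    have hmap : Polynomial.map (Int.castRingHom (ZMod p))
        (cyclotomic (n * p ^ m) ℤ - cyclotomic n ℤ * q) = 0 := by
      rw [Polynomial.map_sub, Polynomial.map_mul, map_cyclotomic, map_cyclotomic, hQ, sub_self]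
    have hc := congrArg (fun f => Polynomial.coeff f i) hmap
    simp only [Polynomial.coeff_map, Polynomial.coeff_zero] at hc
    exact (ZMod.intCast_zmod_eq_zero_iff_dvd _ p).mp hc
  obtain ⟨s, hs⟩ := key
  refine ⟨aeval ζ s, aeval_mem_adjoin_singleton ℤ ζ, ?_⟩
  have heq : cyclotomic (n * p ^ m) ℤ = cyclotomic n ℤ * q + C (p : ℤ) * s := by
    rw [← hs]; ring
  have h1 : Polynomial.eval ζ (cyclotomic (n * p ^ m) ℂ) =
      aeval ζ (cyclotomic (n * p ^ m) ℤ) := by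
    rw [← map_cyclotomic_int (n * p ^ m) ℂ, aeval_def, eval_map, algebraMap_int_eq]
  have h0 : aeval ζ (cyclotomic n ℤ) = 0 := by
    have : Polynomial.eval ζ (cyclotomic n ℂ) = 0 :=
      (hζ.isRoot_cyclotomic hn)
    rw [← map_cyclotomic_int n ℂ, eval_map] at this
    rw [aeval_def]; exact this
  rw [h1, heq, map_add, map_mul, map_mul, h0, zero_mul, zero_add, aeval_C]
  simp
end

section
/- Let n be a positive integer and let A_0, A_1, …, A_{n−1} be integers. For every positive integer i set ω_i = Σ_{j=0}^{n−1} A_j ζ_n^{ij}. Let d be a divisor of n such that ω_{d/q} = 0 for every prime power q ≠ 1 dividing d. Then ω_d ∈ d·ℤ[ζ_n]. -/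
/-!
Put `n = d N` and `f = Σ A_j X^j ∈ ℤ[X]`, so that `ω_i = f(ζ^i)`. For each prime power
`q = p^m ∣ d`, `ζ^(d/q)` is a primitive `Nq`-th root of unity and a root of `f`, so `Φ_{Nq} ∣ f`;
these cyclotomic polynomials are pairwise coprime, hence their product divides `f` in `ℤ[X]`.
Modulo `p`, `Φ_N` divides `Φ_{Np^m}`, so evaluating at the primitive `N`-th root `ζ^d` shows
`p ∣ Φ_{Np^m}(ζ^d)` in `ℤ[ζ]`; and the product of these primes `p` over all `q` is `d`.
-/

open Polynomial

namespace Polynomial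

theorem cyclotomic_dvd_cyclotomic_mul_prime_pow (R : Type*) [Ring R] {p : ℕ} [Fact p.Prime]
    [CharP R p] (N : ℕ) {m : ℕ} (hm : m ≠ 0) : cyclotomic N R ∣ cyclotomic (N * p ^ m) R := by
  have hp : p.Prime := Fact.out
  induction m with
  | zero => exact absurd rfl hm
  | succ m ih =>
    rw [pow_succ, ← mul_assoc]
    rcases Nat.eq_zero_or_pos m with rfl | hm0
    · rw [pow_zero, mul_one]
      by_cases hpN : p ∣ N
      · rw [cyclotomic_mul_prime_dvd_eq_pow R hpN]
        exact dvd_pow_self _ hp.ne_zero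
      · rw [cyclotomic_mul_prime_eq_pow_of_not_dvd R hpN]
        exact dvd_pow_self _ (Nat.sub_ne_zero_of_lt hp.one_lt)
    · rw [cyclotomic_mul_prime_dvd_eq_pow R (dvd_mul_of_dvd_right (dvd_pow_self p hm0.ne') N)]
      exact (ih hm0.ne').trans (dvd_pow_self _ hp.ne_zero)

theorem natCast_dvd_aeval_cyclotomic_mul_prime_pow {S : Type*} [Ring S] {p N m : ℕ}
    (hp : p.Prime) (hm : m ≠ 0) {x : S} (hx : aeval x (cyclotomic N ℤ) = 0) :
    (p : S) ∣ aeval x (cyclotomic (N * p ^ m) ℤ) := by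
  have := Fact.mk hp
  obtain ⟨w, hw⟩ := cyclotomic_dvd_cyclotomic_mul_prime_pow (ZMod p) N hm
  obtain ⟨u, rfl⟩ := map_surjective (Int.castRingHom (ZMod p)) ZMod.intCast_surjective w
  obtain ⟨v, hv⟩ : C (p : ℤ) ∣ cyclotomic (N * p ^ m) ℤ - cyclotomic N ℤ * u := by
    rw [← Ideal.mem_span_singleton, ← Set.image_singleton, ← Ideal.map_span,
      ← ZMod.ker_intCastRingHom, ← ker_mapRingHom, RingHom.mem_ker, map_sub, map_mul,
      coe_mapRingHom, map_cyclotomic_int, map_cyclotomic_int, hw, sub_self]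
  rw [sub_eq_iff_eq_add] at hv
  rw [hv, map_add, map_mul, map_mul, hx, zero_mul, add_zero, aeval_C, eq_intCast, Int.cast_natCast]
  exact dvd_mul_right _ _

theorem prod_cyclotomic_dvd {ι L : Type*} [Field L] [CharZero L] {s : Finset ι} {k : ι → ℕ}
    (hk : Set.InjOn k s) {f : ℤ[X]}
    (hroot : ∀ i ∈ s, ∃ μ : L, IsPrimitiveRoot μ (k i) ∧ aeval μ f = 0) :
    ∏ i ∈ s, cyclotomic (k i) ℤ ∣ f := by
  have hmonic : (∏ i ∈ s, cyclotomic (k i) ℤ).Monic :=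
    monic_prod_of_monic _ _ fun i _ => cyclotomic.monic _ ℤ
  rw [← map_dvd_map (Int.castRingHom ℚ) Int.cast_injective hmonic, Polynomial.map_prod]
  simp only [map_cyclotomic_int]
  refine Finset.prod_dvd_of_coprime
    (fun i hi j hj hij => cyclotomic.isCoprime_rat fun h => hij (hk hi hj h)) fun i hi => ?_
  obtain ⟨μ, hμ, hfμ⟩ := hroot i hi
  rcases Nat.eq_zero_or_pos (k i) with h0 | hpos
  · simp [h0]
  rw [cyclotomic_eq_minpoly_rat hμ hpos]
  exact minpoly.dvd ℚ μ (by rwa [← algebraMap_int_eq, aeval_map_algebraMap])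

end Polynomial

def Nat.primePowerIndices (d : ℕ) : Finset ((_ : ℕ) × ℕ) :=
  d.primeFactors.sigma fun p => Finset.Icc 1 (d.factorization p)

namespace Nat

variable {d : ℕ}

theorem mem_primePowerIndices (hd : d ≠ 0) {i : (_ : ℕ) × ℕ} :
    i ∈ d.primePowerIndices ↔ i.1.Prime ∧ i.2 ≠ 0 ∧ i.1 ^ i.2 ∣ d := by
  rw [primePowerIndices, Finset.mem_sigma, mem_primeFactors, Finset.mem_Icc]
  constructor
  · rintro ⟨⟨hp, -, -⟩, hm, hle⟩
    exact ⟨hp, by omega, (hp.pow_dvd_iff_le_factorization hd).2 hle⟩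
  · rintro ⟨hp, hm, hdvd⟩
    exact ⟨⟨hp, (dvd_pow_self _ hm).trans hdvd, hd⟩, by omega,
      (hp.pow_dvd_iff_le_factorization hd).1 hdvd⟩

theorem injOn_pow_primePowerIndices :
    Set.InjOn (fun i : (_ : ℕ) × ℕ => i.1 ^ i.2) d.primePowerIndices := by
  rintro ⟨p, m⟩ hi ⟨q, l⟩ hj h
  dsimp only at h
  simp only [primePowerIndices, Finset.coe_sigma, Set.mem_sigma_iff, Finset.mem_coe,
    mem_primeFactors, Finset.mem_Icc] at hi hj
  obtain ⟨rfl, rfl⟩ := hi.1.1.pow_inj' hj.1.1 (by omega) (by omega) h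
  rfl

theorem prod_fst_primePowerIndices (hd : d ≠ 0) : ∏ i ∈ d.primePowerIndices, i.1 = d := by
  rw [primePowerIndices, Finset.prod_sigma]
  simp only [Finset.prod_const, Nat.card_Icc, Nat.add_sub_cancel]
  exact prod_factorization_pow_eq_self hd

end Nat

theorem Polynomial.natCast_dvd_aeval_prod_cyclotomic_mul_primePowerIndices {S : Type*}
    [CommRing S] {N d : ℕ} (hd : d ≠ 0) {x : S} (hx : aeval x (cyclotomic N ℤ) = 0) :
    (d : S) ∣ aeval x (∏ i ∈ d.primePowerIndices, cyclotomic (N * i.1 ^ i.2) ℤ) := by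
  rw [map_prod (aeval (R := ℤ) x)]
  conv_lhs => rw [← Nat.prod_fst_primePowerIndices hd, Nat.cast_prod]
  refine Finset.prod_dvd_prod_of_dvd _ _ fun i hi => ?_
  obtain ⟨hp, hm, -⟩ := (Nat.mem_primePowerIndices hd).1 hi
  exact natCast_dvd_aeval_cyclotomic_mul_prime_pow hp hm hx

/-- **Proposition.** Let `n` be a positive integer, `A_0, …, A_{n-1}` integers and
`ω_i = Σ_{j=0}^{n-1} A_j ζ_n^{i·j}`. If `d ∣ n` and `ω_{d/q} = 0` for every prime
power `q ≠ 1` dividing `d`, then `ω_d ∈ d·ℤ[ζ_n]`. -/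
theorem omega_mem_of_vanishing (n : ℕ) (hn : 0 < n) (ζ : ℂ) (hζ : IsPrimitiveRoot ζ n)
    (A : ℕ → ℤ) (ω : ℕ → ℂ)
    (hω : ∀ i : ℕ, ω i = ∑ j ∈ Finset.range n, (A j : ℂ) * ζ ^ (i * j))
    (d : ℕ) (hd : d ∣ n)
    (hvan : ∀ p m : ℕ, p.Prime → 1 ≤ m → p ^ m ∣ d → ω (d / p ^ m) = 0) :
    ∃ r ∈ Algebra.adjoin ℤ ({ζ} : Set ℂ), ω d = (d : ℂ) * r := by
  obtain ⟨N, rfl⟩ := hd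
  have hd0 : d ≠ 0 := left_ne_zero_of_mul hn.ne'
  have hN0 : N ≠ 0 := right_ne_zero_of_mul hn.ne'
  let f : ℤ[X] := ∑ j ∈ Finset.range (d * N), C (A j) * X ^ j
  have hf (i : ℕ) : aeval (ζ ^ i) f = ω i := by simp [f, hω, pow_mul]
  obtain ⟨g, hfg⟩ : ∏ i ∈ d.primePowerIndices, cyclotomic (N * i.1 ^ i.2) ℤ ∣ f := by
    refine prod_cyclotomic_dvd (L := ℂ) ((mul_right_injective₀ hN0).comp_injOn
      Nat.injOn_pow_primePowerIndices) fun i hi => ?_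
    obtain ⟨hp, hm, hdvd⟩ := (Nat.mem_primePowerIndices hd0).1 hi
    refine ⟨ζ ^ (d / i.1 ^ i.2), hζ.pow hn ?_, ?_⟩
    · show d * N = d / i.1 ^ i.2 * (N * i.1 ^ i.2)
      rw [mul_left_comm, Nat.div_mul_cancel hdvd, mul_comm]
    · rw [hf]
      exact hvan _ _ hp (Nat.one_le_iff_ne_zero.2 hm) hdvd
  let z : Algebra.adjoin ℤ ({ζ} : Set ℂ) := ⟨ζ, Algebra.self_mem_adjoin_singleton ℤ ζ⟩
  have hz : aeval (z ^ d) (cyclotomic N ℤ) = 0 := by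
    have hprim : IsPrimitiveRoot (z ^ d) N :=
      (hζ.pow hn rfl).of_map_of_injective (f := (Algebra.adjoin ℤ {ζ}).val)
        Subtype.val_injective
    simpa [aeval_def, eval₂_eq_eval_map] using hprim.isRoot_cyclotomic (Nat.pos_of_ne_zero hN0)
  obtain ⟨r, hr⟩ := natCast_dvd_aeval_prod_cyclotomic_mul_primePowerIndices hd0 hz
  refine ⟨↑(r * aeval (z ^ d) g), SetLike.coe_mem _, ?_⟩
  have hzd : ζ ^ d = (Algebra.adjoin ℤ {ζ}).val (z ^ d) := rfl
  rw [← hf, hfg, hzd, aeval_algHom_apply, map_mul, hr, mul_assoc, map_mul,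
    map_natCast]
  rfl
end

section
/- Let n be a positive integer, let F be a subfield of ℚ(ζ_n), and let R be the ring of integers of F. Call integers x and y equivalent if ζ_n^x and ζ_n^y are conjugate over F (i.e., some field automorphism of ℚ(ζ_n) fixing F pointwise maps ζ_n^x to ζ_n^y), and let Γ_F be a set of representatives of the equivalence classes. For every x ∈ Γ_F let B_x be an integer, and for every integer i define ω_i = Σ_{x∈Γ_F} B_x · Tr_{ℚ(ζ_n)/F}(ζ_n^{ix}). Let d be a divisor of n such that ω_{d/q} = 0 for every prime power q ≠ 1 dividing d. Then ω_d ∈ d·R. -/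
/-!
Every `σ ∈ Gal(ℚ(ζ)/F)` acts as `ζ ↦ ζ ^ k_σ`, so `ω_i = g(ζ ^ i)` for one polynomial
`g = Σ_{x, σ} B_x X ^ (x k_σ mod n)` with integer coefficients. Since `g(X ^ p) ≡ g(X) ^ p` modulo
`p`, the vanishing of `g` at `ζ ^ (d / p)`, …, `ζ ^ (d / p ^ m)` forces `p ^ m ∣ g(ζ ^ d)` among the
algebraic integers of `ℚ(ζ)`. The prime-power parts of `d` are pairwise coprime, so `d ∣ g(ζ ^ d)`,
i.e. `ω_d / d` is an algebraic integer lying in `F`.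
-/

open Polynomial

theorem Polynomial.C_dvd_expand_sub_pow {p : ℕ} (hp : p.Prime) (f : ℤ[X]) :
    C (p : ℤ) ∣ expand ℤ p f - f ^ p := by
  have : Fact p.Prime := ⟨hp⟩
  have hmap : (expand ℤ p f - f ^ p).map (Int.castRingHom (ZMod p)) = 0 := by
    rw [Polynomial.map_sub, Polynomial.map_pow, map_expand, ZMod.expand_card, sub_self]
  rw [C_dvd_iff_dvd_coeff]
  intro i
  rw [← ZMod.intCast_zmod_eq_zero_iff_dvd, ← eq_intCast (Int.castRingHom (ZMod p)), ← coeff_map,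
    hmap, coeff_zero]

theorem Polynomial.exists_aeval_pow_prime_eq {A : Type*} [CommRing A] {p : ℕ} (hp : p.Prime)
    (f : ℤ[X]) : ∃ T : ℤ[X], ∀ z : A, aeval (z ^ p) f = aeval z f ^ p + p * aeval z T := by
  obtain ⟨T, hT⟩ := C_dvd_expand_sub_pow hp f
  refine ⟨T, fun z => ?_⟩
  have := congrArg (aeval z) hT
  rw [map_sub, expand_aeval, map_pow, map_mul, aeval_C, algebraMap_int_eq, eq_intCast,
    Int.cast_natCast] at this
  exact eq_add_of_sub_eq' this

theorem Polynomial.prime_pow_dvd_aeval_pow_prime_pow {A : Type*} [CommRing A] {p : ℕ}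
    (hp : p.Prime) (hreg : IsLeftRegular (p : A)) (y : A) (m : ℕ) (f : ℤ[X])
    (hvan : ∀ j < m, aeval (y ^ p ^ j) f = 0) : (p : A) ^ m ∣ aeval (y ^ p ^ m) f := by
  induction m generalizing f with
  | zero => simp
  | succ m ih =>
    obtain ⟨T, hT⟩ := exists_aeval_pow_prime_eq (A := A) hp f
    -- `p * T` vanishes wherever `f` vanishes at both `z` and `z ^ p`.
    have hT_van : ∀ j < m, aeval (y ^ p ^ j) T = 0 := fun j hj => hreg <| by
      have := hT (y ^ p ^ j)
      rw [← pow_mul, ← pow_succ, hvan (j + 1) (by omega), hvan j (by omega),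
        zero_pow hp.ne_zero, zero_add] at this
      simpa using this.symm
    obtain ⟨t, ht⟩ := ih T hT_van
    refine ⟨t, ?_⟩
    rw [pow_succ, pow_mul, hT, hvan m m.lt_succ_self, zero_pow hp.ne_zero, zero_add, ht]
    ring

theorem Nat.cast_dvd_of_forall_prime_pow_dvd {A : Type*} [CommRing A] {d : ℕ} (hd : d ≠ 0)
    {x : A} (h : ∀ p m : ℕ, p.Prime → p ^ m ∣ d → (p : A) ^ m ∣ x) : (d : A) ∣ x := by
  rw [← Nat.prod_factorization_pow_eq_self hd, Nat.prod_factorization_eq_prod_primeFactors,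
    Nat.cast_prod]
  refine Finset.prod_dvd_of_coprime (fun p hp q hq hpq => ?_) fun p hp => ?_
  · have := (Nat.coprime_primes (Nat.prime_of_mem_primeFactors hp)
      (Nat.prime_of_mem_primeFactors hq)).2 hpq
    simpa using (Nat.isCoprime_iff_coprime.2 (this.pow _ _)).map (Int.castRingHom A)
  · push_cast
    exact h p _ (Nat.prime_of_mem_primeFactors hp) (Nat.ordProj_dvd d p)

theorem Polynomial.natCast_dvd_aeval_pow_of_aeval_pow_div_eq_zero {A : Type*} [CommRing A]
    [IsDomain A] [CharZero A] (y : A) (f : ℤ[X]) {d : ℕ} (hd : d ≠ 0)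
    (hvan : ∀ p m : ℕ, p.Prime → 1 ≤ m → p ^ m ∣ d → aeval (y ^ (d / p ^ m)) f = 0) :
    (d : A) ∣ aeval (y ^ d) f := by
  refine Nat.cast_dvd_of_forall_prime_pow_dvd hd fun p m hp ⟨e, he⟩ => ?_
  rw [he, mul_comm, pow_mul]
  refine prime_pow_dvd_aeval_pow_prime_pow hp
    (IsRegular.of_ne_zero (Nat.cast_ne_zero.2 hp.ne_zero)).left _ m f fun j hj => ?_
  have hsplit : d = p ^ (m - j) * (e * p ^ j) := by
    rw [he, mul_left_comm, ← pow_add, Nat.sub_add_cancel hj.le, mul_comm]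
  have hvan_j := hvan p (m - j) hp (by omega) (hsplit ▸ dvd_mul_right _ _)
  rwa [hsplit, Nat.mul_div_cancel_left _ (pow_pos hp.pos _), pow_mul] at hvan_j

theorem zpow_eq_pow_toNat_emod {G₀ : Type*} [GroupWithZero G₀] {x : G₀} {n : ℕ} (hn : n ≠ 0)
    (hx : x ^ n = 1) (z : ℤ) : x ^ z = x ^ (z % n).toNat := by
  have hx0 : x ≠ 0 := by rintro rfl; simp [zero_pow hn] at hx
  rw [← zpow_natCast, Int.toNat_of_nonneg (Int.emod_nonneg _ (by exact_mod_cast hn))]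
  conv_lhs => rw [← Int.emod_add_mul_ediv z n]
  rw [zpow_add₀ hx0, zpow_mul, zpow_natCast, hx, one_zpow, mul_one]

theorem exists_intPolynomial_aeval_pow_eq_sum_zpow {K : Type*} [Field K] {μ : K} {n : ℕ}
    (hn : n ≠ 0) (hμ : μ ^ n = 1) {ι : Type*} (s : Finset ι) (c e : ι → ℤ) :
    ∃ g : ℤ[X], ∀ i : ℕ, aeval (μ ^ i) g = ∑ j ∈ s, c j * (μ ^ i) ^ e j := by
  refine ⟨∑ j ∈ s, C (c j) * X ^ (e j % n).toNat, fun i => ?_⟩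
  have hμi : (μ ^ i) ^ n = 1 := by rw [← pow_mul, mul_comm, pow_mul, hμ, one_pow]
  simp only [map_sum, map_mul, eq_intCast, map_intCast, map_pow, aeval_X,
    zpow_eq_pow_toNat_emod hn hμi]

theorem IsPrimitiveRoot.isCyclotomicExtension_of_adjoin_eq_top {K L : Type*} [Field K] [Field L]
    [Algebra K L] {ζ : L} {n : ℕ} [NeZero n] (hζ : IsPrimitiveRoot ζ n)
    (h : IntermediateField.adjoin K {ζ} = ⊤) : IsCyclotomicExtension {n} K L := by
  refine (IsCyclotomicExtension.iff_singleton n K L).2 ⟨⟨ζ, hζ⟩, fun x => ?_⟩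
  have hx : x ∈ (IntermediateField.adjoin K {ζ}).toSubalgebra := h ▸ IntermediateField.mem_top
  rw [IntermediateField.adjoin_simple_toSubalgebra_of_isAlgebraic
    (hζ.isIntegral (NeZero.pos n)).tower_top.isAlgebraic] at hx
  exact Algebra.adjoin_mono (by simpa using hζ.pow_eq_one) hx

theorem IsPrimitiveRoot.algebraMap_trace_zpow {F K : Type*} [Field F] [Field K] [Algebra F K]
    [FiniteDimensional F K] [IsGalois F K] {ζ : K} {n : ℕ} [NeZero n] (hζ : IsPrimitiveRoot ζ n)
    (z : ℤ) : algebraMap F K (Algebra.trace F K (ζ ^ z)) =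
      ∑ σ : K ≃ₐ[F] K, ζ ^ (z * (hζ.autToPow F σ : ZMod n).val) := by
  rw [trace_eq_sum_automorphisms]
  refine Finset.sum_congr rfl fun σ _ => ?_
  rw [map_zpow₀, ← hζ.autToPow_spec F σ, ← zpow_natCast, ← zpow_mul, mul_comm]

theorem IsPrimitiveRoot.exists_aeval_pow_eq_sum_mul_trace (F : Type*) {K : Type*} [Field F]
    [Field K] [Algebra F K] [FiniteDimensional F K] [IsGalois F K] {ζ : K} {n : ℕ} [NeZero n]
    (hζ : IsPrimitiveRoot ζ n) (Γ : Finset ℤ) (B : ℤ → ℤ) :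
    ∃ g : ℤ[X], ∀ i : ℕ, aeval (ζ ^ i) g =
      algebraMap F K (∑ x ∈ Γ, (B x : F) * Algebra.trace F K (ζ ^ ((i : ℤ) * x))) := by
  obtain ⟨g, hg⟩ := exists_intPolynomial_aeval_pow_eq_sum_zpow (NeZero.ne n) hζ.pow_eq_one
    (Γ ×ˢ Finset.univ) (fun xσ => B xσ.1) (fun xσ => xσ.1 * (hζ.autToPow F xσ.2 : ZMod n).val)
  refine ⟨g, fun i => ?_⟩
  rw [hg, Finset.sum_product, map_sum]
  refine Finset.sum_congr rfl fun x _ => ?_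
  rw [map_mul, map_intCast, hζ.algebraMap_trace_zpow, Finset.mul_sum]
  refine Finset.sum_congr rfl fun σ _ => ?_
  rw [← zpow_natCast ζ i, ← zpow_mul, mul_assoc]

theorem exists_mem_integralClosure_eq_natCast_mul {F K : Type*} [Field F] [Field K] [Algebra F K]
    [CharZero F] {x : F} {d : ℕ} (hd : d ≠ 0) {t : K} (ht : IsIntegral ℤ t)
    (h : algebraMap F K x = d * t) : ∃ r ∈ integralClosure ℤ F, x = d * r := by
  have hdF : (d : F) ≠ 0 := Nat.cast_ne_zero.2 hd
  refine ⟨x / d, ?_, (mul_div_cancel₀ x hdF).symm⟩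
  have hdK : (d : K) ≠ 0 := by simpa using (_root_.map_ne_zero (algebraMap F K)).2 hdF
  have : algebraMap F K (x / d) = t := by
    rw [map_div₀, h, map_natCast, mul_div_cancel_left₀ _ hdK]
  rw [← this] at ht
  exact (isIntegral_algebraMap_iff (algebraMap F K).injective).1 ht

theorem omega_trace_mem_of_vanishing_general (n : ℕ) (hn : 0 < n)
    (K : Type*) [Field K] [CharZero K] (ζ : K) (hζ : IsPrimitiveRoot ζ n)
    (hK : IntermediateField.adjoin ℚ ({ζ} : Set K) = ⊤)
    (F : IntermediateField ℚ K)
    (Γ : Finset ℤ)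
    (B : ℤ → ℤ) (ω : ℤ → F)
    (hω : ∀ i : ℤ, ω i = ∑ x ∈ Γ, (B x : F) * Algebra.trace F K (ζ ^ (i * x)))
    (d : ℕ)
    (hvan : ∀ p m : ℕ, p.Prime → 1 ≤ m → p ^ m ∣ d → ω ((d / p ^ m : ℕ) : ℤ) = 0) :
    ∃ r ∈ integralClosure ℤ F, ω (d : ℤ) = (d : F) * r := by
  rcases eq_or_ne d 0 with rfl | hd
  · exact ⟨0, zero_mem _, by simpa using hvan 2 1 Nat.prime_two le_rfl (dvd_zero _)⟩
  have : NeZero n := ⟨hn.ne'⟩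
  have := hζ.isCyclotomicExtension_of_adjoin_eq_top hK
  have := IsCyclotomicExtension.finiteDimensional {n} ℚ K
  have := IsCyclotomicExtension.isGalois {n} ℚ K
  obtain ⟨g, hg⟩ := hζ.exists_aeval_pow_eq_sum_mul_trace F Γ B
  let ζA : integralClosure ℤ K := ⟨ζ, hζ.isIntegral hn⟩
  have hgA (i : ℕ) : algebraMap _ K (aeval (ζA ^ i) g) = algebraMap F K (ω i) := by
    rw [← aeval_algebraMap_apply, map_pow, hω]
    exact hg i
  have hdvd : (d : integralClosure ℤ K) ∣ aeval (ζA ^ d) g :=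
    natCast_dvd_aeval_pow_of_aeval_pow_div_eq_zero ζA g hd fun p m hp hm hpm =>
      FaithfulSMul.algebraMap_injective _ K <| by rw [hgA, hvan p m hp hm hpm, map_zero, map_zero]
  obtain ⟨t, ht⟩ := hdvd
  refine exists_mem_integralClosure_eq_natCast_mul hd t.2 ?_
  rw [← hgA, ht, map_mul, map_natCast]
  rfl

/-- **Corollary.** Let `K = ℚ(ζ_n)` for a primitive `n`-th root of unity `ζ`, let
`F` be a subfield of `K` with ring of integers `R` (the integral closure of `ℤ` in
`F`), and let `Γ` be a set of representatives of the relation identifying `x` and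
`y` when `ζ^x` and `ζ^y` are conjugate over `F`.  For integers `B_x` (`x ∈ Γ`) set
`ω_i = Σ_{x∈Γ} B_x · Tr_{K/F}(ζ^{i·x})`.  If `d ∣ n` and `ω_{d/q} = 0` for every
prime power `q ≠ 1` dividing `d`, then `ω_d ∈ d·R`. -/
theorem omega_trace_mem_of_vanishing (n : ℕ) (hn : 0 < n)
    (K : Type*) [Field K] [CharZero K] (ζ : K) (hζ : IsPrimitiveRoot ζ n)
    (hK : IntermediateField.adjoin ℚ ({ζ} : Set K) = ⊤)
    (F : IntermediateField ℚ K)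
    (Γ : Finset ℤ)
    (hΓ : ∀ y : ℤ, ∃! x, x ∈ Γ ∧ ∃ σ : K ≃ₐ[F] K, σ (ζ ^ x) = ζ ^ y)
    (B : ℤ → ℤ) (ω : ℤ → F)
    (hω : ∀ i : ℤ, ω i = ∑ x ∈ Γ, (B x : F) * Algebra.trace F K (ζ ^ (i * x)))
    (d : ℕ) (hd : d ∣ n)
    (hvan : ∀ p m : ℕ, p.Prime → 1 ≤ m → p ^ m ∣ d → ω ((d / p ^ m : ℕ) : ℤ) = 0) :
    ∃ r ∈ integralClosure ℤ F, ω (d : ℤ) = (d : F) * r :=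
  omega_trace_mem_of_vanishing_general n hn K ζ hζ hK F Γ B ω hω d hvan
end

section
/- Let n be a positive integer and let x, y be integers. Let d be a divisor of the radical of n (the product of the distinct primes dividing n) such that x ≡ y (mod n/d). If d divides both γ_n(x) and γ_n(y), then x ≡ y (mod n). -/
/-- `nPart n p = p^{v_p(n)}`, the `p`-part of `n`. -/
def nPart (n p : ℕ) : ℕ := p ^ (n.factorization p)

/-- The representative of `x` modulo `m` lying in the interval `(-m/2, m/2]`. -/
def midRep (x : ℤ) (m : ℕ) : ℤ :=
  if 2 * (x % (m : ℤ)) ≤ (m : ℤ) then x % (m : ℤ) else x % (m : ℤ) - (m : ℤ)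

/-- `|x|_m`, the absolute value of the representative of `x` modulo `m` in
`(-m/2, m/2]`. -/
def absRep (x : ℤ) (m : ℕ) : ℤ := |midRep x m|

/-- `γ_n(x)`, the product of the primes `p` dividing `n` with
`|x|_{n_p} < n_p/(2p)`. -/
def gammaFn (n : ℕ) (x : ℤ) : ℕ :=
  ∏ p ∈ n.primeFactors,
    if 2 * (p : ℤ) * absRep x (nPart n p) < (nPart n p : ℤ) then p else 1

/-- The predicate describing membership in `𝔹_n ⊆ ℤ/nℤ`:
`|x|_{n_p} > n_p/(2p)` for every prime `p` dividing `n`. -/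
def inBB (n : ℕ) (b : ZMod n) : Prop :=
  ∀ p ∈ n.primeFactors, (nPart n p : ℤ) < 2 * (p : ℤ) * absRep (b.val : ℤ) (nPart n p)


/-- The radical of `n`: the product of the distinct primes dividing `n`. -/
def radical (n : ℕ) : ℕ := ∏ p ∈ n.primeFactors, p


/-!
Work one prime `p ∣ n` at a time. If `p ∤ d`, the `p`-part of `n / d` is already `n_p`. If `p ∣ d`,
then `d` being squarefree makes it `n_p / p`, and `p ∣ γ_n(x), γ_n(y)` says that the balanced
representatives of `x` and `y` modulo `n_p` are smaller than `n_p / (2p)` in absolute value; being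
congruent modulo `n_p / p`, they coincide, so `x ≡ y (mod n_p)`. The prime powers `n_p` are
pairwise coprime with product `n`.
-/

lemma midRep_modEq (x : ℤ) (m : ℕ) : midRep x m ≡ x [ZMOD m] := by
  unfold midRep
  split_ifs
  · exact Int.mod_modEq x m
  · simpa using (Int.mod_modEq x m).sub_right (m : ℤ)

lemma coprime_of_mem_primeFactors {n p q : ℕ} (hp : p ∈ n.primeFactors) (hq : q ∈ n.primeFactors)
    (hpq : p ≠ q) : p.Coprime q :=
  (Nat.coprime_primes (Nat.prime_of_mem_primeFactors hp) (Nat.prime_of_mem_primeFactors hq)).mpr hpq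

lemma squarefree_radical (n : ℕ) : Squarefree (radical n) :=
  Finset.squarefree_prod_of_pairwise_isCoprime
    (fun _ hp _ hq hpq => Nat.coprime_iff_isRelPrime.mp (coprime_of_mem_primeFactors hp hq hpq))
    fun _ hp => (Nat.prime_of_mem_primeFactors hp).squarefree

lemma nPart_eq_mul_nPart_div {n d : ℕ} (p : ℕ) (hn : n ≠ 0) (hdn : d ∣ n) :
    nPart n p = nPart d p * nPart (n / d) p := by
  obtain ⟨k, rfl⟩ := hdn
  have hd : d ≠ 0 := left_ne_zero_of_mul hn
  rw [Nat.mul_div_cancel_left k (Nat.pos_of_ne_zero hd)]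
  exact Nat.ordProj_mul p hd (right_ne_zero_of_mul hn)

lemma nPart_eq_self_of_squarefree {d p : ℕ} (hd : Squarefree d) (hp : p.Prime) (hpd : p ∣ d) :
    nPart d p = p := by
  rw [nPart, Nat.factorization_eq_one_of_squarefree hd hp hpd, pow_one]

lemma nPart_eq_one_of_not_dvd {d p : ℕ} (hpd : ¬p ∣ d) : nPart d p = 1 := by
  rw [nPart, Nat.factorization_eq_zero_of_not_dvd hpd, pow_zero]

lemma two_mul_absRep_lt_of_dvd_gammaFn {n p : ℕ} {x : ℤ} (hp : p.Prime) (hpx : p ∣ gammaFn n x) :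
    2 * (p : ℤ) * absRep x (nPart n p) < nPart n p := by
  obtain ⟨q, hq, hpq⟩ := hp.prime.exists_mem_finset_dvd hpx
  split_ifs at hpq
  · rwa [(Nat.prime_dvd_prime_iff_eq hp (Nat.prime_of_mem_primeFactors hq)).mp hpq]
  · exact absurd hpq hp.not_dvd_one

lemma Int.eq_of_modEq_of_two_mul_abs_lt {a b m : ℤ} (h : a ≡ b [ZMOD m])
    (ha : 2 * |a| < m) (hb : 2 * |b| < m) : a = b := by
  have hlt : |b - a| < m := by linarith [abs_sub b a]
  linarith [Int.eq_zero_of_abs_lt_dvd h.dvd hlt]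

lemma modEq_mul_of_two_mul_absRep_lt {x y : ℤ} {c m : ℕ} (h : x ≡ y [ZMOD m])
    (hx : 2 * (c : ℤ) * absRep x (c * m) < ((c * m : ℕ) : ℤ))
    (hy : 2 * (c : ℤ) * absRep y (c * m) < ((c * m : ℕ) : ℤ)) :
    x ≡ y [ZMOD (c * m : ℕ)] := by
  have hdvd : (m : ℤ) ∣ ((c * m : ℕ) : ℤ) := by exact_mod_cast dvd_mul_left m c
  have hxy : midRep x (c * m) ≡ midRep y (c * m) [ZMOD m] :=
    ((midRep_modEq x _).of_dvd hdvd).trans (h.trans ((midRep_modEq y _).of_dvd hdvd).symm)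
  have small {z : ℤ} (hz : 2 * (c : ℤ) * absRep z (c * m) < ((c * m : ℕ) : ℤ)) :
      2 * |midRep z (c * m)| < m := by
    rw [absRep, Nat.cast_mul] at hz
    exact lt_of_mul_lt_mul_left (by linarith [hz]) (Nat.cast_nonneg c)
  have heq := Int.eq_of_modEq_of_two_mul_abs_lt hxy (small hx) (small hy)
  exact (midRep_modEq x _).symm.trans (heq ▸ midRep_modEq y _)

lemma modEq_of_forall_modEq_nPart {n : ℕ} (hn : n ≠ 0) {x y : ℤ}
    (h : ∀ p ∈ n.primeFactors, x ≡ y [ZMOD nPart n p]) : x ≡ y [ZMOD n] := by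
  rw [Int.modEq_iff_dvd, Nat.prod_primeFactors_pow_factorization hn, Nat.cast_prod]
  refine Finset.prod_dvd_of_coprime (fun p hp q hq hpq => ?_) fun p hp => (h p hp).dvd
  exact Nat.isCoprime_iff_coprime.mpr ((coprime_of_mem_primeFactors hp hq hpq).pow _ _)

/-- **Lemma (Elementary, part 2).** Let `d` divide the radical of `n` and suppose
`x ≡ y (mod n/d)`.  If `d` divides both `γ_n(x)` and `γ_n(y)`, then
`x ≡ y (mod n)`. -/
theorem modEq_of_dvd_gamma (n : ℕ) (hn : 0 < n) (x y : ℤ) (d : ℕ)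
    (hd : d ∣ radical n) (hxy : x ≡ y [ZMOD (n / d : ℕ)])
    (hdx : d ∣ gammaFn n x) (hdy : d ∣ gammaFn n y) :
    x ≡ y [ZMOD n] := by
  have hsq : Squarefree d := (squarefree_radical n).squarefree_of_dvd hd
  have hdn : d ∣ n := hd.trans (Nat.prod_primeFactors_dvd n)
  refine modEq_of_forall_modEq_nPart hn.ne' fun p hp => ?_
  have hp' := Nat.prime_of_mem_primeFactors hp
  have hxy_p : x ≡ y [ZMOD nPart (n / d) p] :=
    hxy.of_dvd (by exact_mod_cast Nat.ordProj_dvd (n / d) p)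
  have hsplit := nPart_eq_mul_nPart_div p hn.ne' hdn
  by_cases hpd : p ∣ d
  · rw [nPart_eq_self_of_squarefree hsq hp' hpd] at hsplit
    have hx := two_mul_absRep_lt_of_dvd_gammaFn hp' (hpd.trans hdx)
    have hy := two_mul_absRep_lt_of_dvd_gammaFn hp' (hpd.trans hdy)
    rw [hsplit] at hx hy ⊢
    exact modEq_mul_of_two_mul_absRep_lt hxy_p hx hy
  · rwa [hsplit, nPart_eq_one_of_not_dvd hpd, one_mul]
end

section
/- Let n be an odd positive integer, let p be the smallest prime dividing n, and let d be a divisor of n with d ≠ n. Let ν_1, …, ν_d be integers such that the multiset of ∼_{n/p}-classes of (ν_1, …, ν_d) equals the multiset of ∼_{n/p}-classes of (1, 2, …, d), where x ∼_m y means x ≡ ±y (mod m). If ν_i ≡ 0 (mod n) for some index i, then d = n/p and ν_j ≢ 0 (mod n) for every index j ≠ i. -/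
/-- **Lemma (Kappa and prime, part 1).** Let `n` be odd, `p` the smallest prime
dividing `n`, and `d ∣ n` with `d ≠ n`.  Suppose `ν_1, …, ν_d` are integers whose
multiset of `∼_{n/p}`-classes coincides with that of `(1, …, d)`, where
`x ∼_m y` means `x ≡ ±y (mod m)`.  If `ν_i ≡ 0 (mod n)` for some `i`, then
`d = n/p` and `ν_j ≢ 0 (mod n)` for every `j ≠ i`. -/
theorem kappa_unique (n : ℕ) (hn : 0 < n) (hodd : Odd n)
    (p : ℕ) (hp : p.Prime) (hpn : p ∣ n) (hmin : ∀ q : ℕ, q.Prime → q ∣ n → p ≤ q)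
    (d : ℕ) (hd : d ∣ n) (hdn : d ≠ n)
    (ν : Fin d → ℤ)
    (hperm : ∃ σ : Equiv.Perm (Fin d), ∀ i : Fin d,
      ν (σ i) ≡ ((i : ℤ) + 1) [ZMOD ((n / p : ℕ) : ℕ)] ∨
      ν (σ i) ≡ -((i : ℤ) + 1) [ZMOD ((n / p : ℕ) : ℕ)])
    (i : Fin d) (hi : (n : ℤ) ∣ ν i) :
    d = n / p ∧ ∀ j : Fin d, j ≠ i → ¬ (n : ℤ) ∣ ν j := by
  obtain ⟨σ, hσ⟩ := hperm
  set m : ℕ := n / p with hm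
  have hmdvdn : m ∣ n := Nat.div_dvd_of_dvd hpn
  -- d ≤ m
  have hdm : d ≤ m := by
    have hd0 : 0 < d := i.pos
    have ht : n / d * d = n := Nat.div_mul_cancel hd
    have h0 : n / d ≠ 0 := by intro h0; rw [h0, zero_mul] at ht; omega
    have h1' : n / d ≠ 1 := by intro h0; rw [h0, one_mul] at ht; exact hdn ht
    have hq : p ≤ n / d := by
      obtain ⟨q, hq, hqd⟩ := (n / d).exists_prime_and_dvd h1'
      exact le_trans (hmin q hq (hqd.trans (Nat.div_dvd_of_dvd hd)))
        (Nat.le_of_dvd (Nat.pos_of_ne_zero h0) hqd)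
    have : d * p ≤ n := by
      calc d * p ≤ d * (n / d) := Nat.mul_le_mul_left d hq
        _ = n := Nat.mul_div_cancel' hd
    exact Nat.le_div_iff_mul_le hp.pos |>.mpr this
  -- key: for any index j with (m:ℤ) ∣ ν j, σ.symm j + 1 = m (as nats)
  have key : ∀ j : Fin d, (m : ℤ) ∣ ν j → ((σ.symm j : ℕ) + 1) = m := by
    intro j hj
    have h := hσ (σ.symm j)
    rw [Equiv.apply_symm_apply] at h
    have hdvd : (m : ℤ) ∣ ((σ.symm j : ℤ) + 1) := by
      rcases h with h | h
      · exact Int.modEq_zero_iff_dvd.mp (h.symm.trans (Int.modEq_zero_iff_dvd.mpr hj))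
      · have h0 : -((σ.symm j : ℤ) + 1) ≡ 0 [ZMOD (m:ℤ)] :=
          h.symm.trans (Int.modEq_zero_iff_dvd.mpr hj)
        have h0' := h0.neg
        simp only [neg_neg, neg_zero] at h0'
        exact Int.modEq_zero_iff_dvd.mp h0'
    have hdvd' : m ∣ ((σ.symm j : ℕ) + 1) := by exact_mod_cast hdvd
    have h1 : (σ.symm j : ℕ) + 1 ≤ d := (σ.symm j).2
    exact Nat.le_antisymm (le_trans h1 hdm) (Nat.le_of_dvd (by omega) hdvd')
  have hmi : (m : ℤ) ∣ ν i := dvd_trans (by exact_mod_cast hmdvdn) hi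
  have hia := key i hmi
  have hdm' : d = m := by
    have := (σ.symm i).2
    omega
  refine ⟨hdm', fun j hj hnj => ?_⟩
  have hjb := key j (dvd_trans (by exact_mod_cast hmdvdn) hnj)
  have : σ.symm j = σ.symm i := by
    apply Fin.ext; omega
  exact hj (σ.symm.injective this)
end

section
/- Let q be a prime power, G = PSL(2,q), and let n > 1 be an integer with gcd(n, 2q) = 1 and n not a prime power. Let u be a unit of augmentation 1 and order n in ℤG, let g₀ ∈ G be an element of order n, and let ζ be a primitive n-th complex root of unity. Let Γ_n be a set of representatives of the relation x ∼_n y ⟺ x ≡ ±y (mod n) on ℤ, write ε_x = ε_{g₀^x}(u) for x ∈ Γ_n, and for each integer i set λ_i = Σ_{x∈Γ_n} ε_x (ζ^{ix} + ζ^{−ix}) and α_i = ζ^i + ζ^{−i}. Let d be a divisor of n such that λ_{d/q'} = α_{d/q'} for every prime power q' ≠ 1 dividing d. Then λ_d − α_d ∈ d·ℤ[ζ + ζ^{−1}]. -/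
open scoped MatrixGroups
open scoped Classical

/-- The partial augmentation `ε_g(α)` of `α ∈ ℤG` at `g ∈ G`: the sum of the
coefficients of `α` over the conjugacy class of `g`. -/
noncomputable def partialAug {G : Type*} [Group G] (α : MonoidAlgebra ℤ G) (g : G) : ℤ :=
  α.coeff.sum fun h c => if IsConj g h then c else 0

/-- The augmentation (sum of coefficients) of an element of `ℤG`. -/
noncomputable def aug {G : Type*} [Group G] (α : MonoidAlgebra ℤ G) : ℤ :=
  α.coeff.sum fun _ c => c

/-!
Write `λ_i - α_i = P(ζ^i)` for an integer polynomial `P`. For a prime `q` with `q^v ∥ d`, say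
`d = q^v e`, the hypothesis says that `P` vanishes at `(ζ^e)^(q^j)` for `j < v`; dividing out
cyclotomic polynomials and reducing the quotients modulo `q` by Frobenius gives
`q^v ∣ P(ζ^d)` in `ℤ[ζ]`, and these coprime prime powers combine to `d ∣ P(ζ^d)`. The quotient
is real, and since `ℤ[ζ] = ℤ[ζ + ζ⁻¹] + ζ ℤ[ζ + ζ⁻¹]` with `ζ̄ = ζ⁻¹`, the real elements of `ℤ[ζ]`
lie in `ℤ[ζ + ζ⁻¹]`.
-/

open Polynomial ComplexConjugate

theorem ZMod.expand_pow_card (p : ℕ) [Fact p.Prime] (f : (ZMod p)[X]) (k : ℕ) :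
    expand (ZMod p) (p ^ k) f = f ^ p ^ k := by
  induction k with
  | zero => simp
  | succ k ih => rw [pow_succ, expand_mul, ZMod.expand_card, map_pow, ih, pow_mul]

theorem Polynomial.C_dvd_expand_pow_sub_pow {q : ℕ} (hq : q.Prime) (f : ℤ[X]) (k : ℕ) :
    C (q : ℤ) ∣ expand ℤ (q ^ k) f - f ^ q ^ k := by
  have := Fact.mk hq
  rw [C_dvd_iff_dvd_coeff]
  intro i
  rw [← ZMod.intCast_zmod_eq_zero_iff_dvd, ← eq_intCast (Int.castRingHom (ZMod q)), ← coeff_map,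
    Polynomial.map_sub, Polynomial.map_pow, map_expand, ZMod.expand_pow_card, sub_self, coeff_zero]

theorem Polynomial.natCast_dvd_aeval_pow_sub_pow {R : Type*} [CommRing R] {q : ℕ} (hq : q.Prime)
    (f : ℤ[X]) (x : R) (k : ℕ) : (q : R) ∣ aeval (x ^ q ^ k) f - aeval x f ^ q ^ k := by
  obtain ⟨g, hg⟩ := C_dvd_expand_pow_sub_pow hq f k
  refine ⟨aeval x g, ?_⟩
  rw [← expand_aeval, ← map_pow, ← map_sub, hg, map_mul, aeval_C, algebraMap_int_eq, eq_intCast,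
    Int.cast_natCast]

section CyclotomicValues

variable {R : Type*} [CommRing R] [IsDomain R] [CharZero R] {N : ℕ} {μ : R}

theorem Polynomial.aeval_cyclotomic_int_eq_zero_iff (hN : 0 < N) :
    aeval μ (cyclotomic N ℤ) = 0 ↔ IsPrimitiveRoot μ N := by
  have : NeZero (N : R) := ⟨Nat.cast_ne_zero.mpr hN.ne'⟩
  rw [← isRoot_cyclotomic_iff, IsRoot, ← map_cyclotomic_int N R, ← algebraMap_int_eq,
    eval_map_algebraMap]

theorem IsPrimitiveRoot.cyclotomic_dvd_of_aeval_eq_zero (hμ : IsPrimitiveRoot μ N) (hN : 0 < N)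
    {f : ℤ[X]} (hf : aeval μ f = 0) : cyclotomic N ℤ ∣ f := by
  have hint := hμ.isIntegral hN
  have hmin : cyclotomic N ℤ = minpoly ℤ μ :=
    eq_of_monic_of_dvd_of_natDegree_le (minpoly.monic hint) (cyclotomic.monic N ℤ)
      (minpoly.isIntegrallyClosed_dvd hint ((aeval_cyclotomic_int_eq_zero_iff hN).mpr hμ))
      (by simpa [natDegree_cyclotomic] using hμ.totient_le_degree_minpoly)
  exact hmin ▸ minpoly.isIntegrallyClosed_dvd hint hf

theorem IsPrimitiveRoot.aeval_cyclotomic_pow_prime_pow_ne_zero (hμ : IsPrimitiveRoot μ N)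
    (hN : 0 < N) {q : ℕ} (hq : q.Prime) (hqN : q ∣ N) {j : ℕ} (hj : j ≠ 0) :
    aeval (μ ^ q ^ j) (cyclotomic N ℤ) ≠ 0 := by
  rw [Ne, aeval_cyclotomic_int_eq_zero_iff hN, hμ.pow_iff_coprime hN,
    Nat.coprime_pow_left_iff (Nat.pos_of_ne_zero hj), Nat.Prime.coprime_iff_not_dvd hq]
  exact not_not.mpr hqN

/-- Each vanishing point `μ ^ q ^ j` peels off a cyclotomic factor, and each such factor is
`≡ 0 (mod q)` at `μ ^ q ^ v` by Frobenius. -/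
theorem IsPrimitiveRoot.prime_pow_dvd_aeval_pow_prime_pow (hμ : IsPrimitiveRoot μ N) (hN : 0 < N)
    {q v : ℕ} (hq : q.Prime) (hqN : q ^ v ∣ N) {f : ℤ[X]}
    (hf : ∀ j < v, aeval (μ ^ q ^ j) f = 0) : (q : R) ^ v ∣ aeval (μ ^ q ^ v) f := by
  induction v generalizing N μ f with
  | zero => simp
  | succ v ih =>
    obtain ⟨g, rfl⟩ := hμ.cyclotomic_dvd_of_aeval_eq_zero hN (by simpa using hf 0 v.succ_pos)
    have hqN' : q ∣ N := (dvd_pow_self q v.succ_ne_zero).trans hqN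
    obtain ⟨M, rfl⟩ := hqN'
    have hμq : IsPrimitiveRoot (μ ^ q) M := hμ.pow hN rfl
    have hg : ∀ j < v, aeval ((μ ^ q) ^ q ^ j) g = 0 := fun j hj => by
      have hfj := hf (j + 1) (by omega)
      rw [map_mul] at hfj
      rw [← pow_mul, ← pow_succ']
      exact (mul_eq_zero.mp hfj).resolve_left
        (hμ.aeval_cyclotomic_pow_prime_pow_ne_zero hN hq (dvd_mul_right q M) j.succ_ne_zero)
    have hgv := ih hμq (Nat.pos_of_mul_pos_left hN)
      ((Nat.mul_dvd_mul_iff_left hq.pos).mp (pow_succ' q v ▸ hqN)) hg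
    rw [← pow_mul, ← pow_succ'] at hgv
    have hΦ : (q : R) ∣ aeval (μ ^ q ^ (v + 1)) (cyclotomic (q * M) ℤ) := by
      simpa [(aeval_cyclotomic_int_eq_zero_iff hN).mpr hμ, hq.ne_zero] using
        natCast_dvd_aeval_pow_sub_pow hq (cyclotomic (q * M) ℤ) μ (v + 1)
    rw [map_mul, pow_succ']
    exact mul_dvd_mul hΦ hgv

end CyclotomicValues

theorem Nat.cast_dvd_of_forall_pow_factorization_dvd {R : Type*} [CommRing R] {d : ℕ} (hd : d ≠ 0)
    {x : R} (h : ∀ p ∈ d.primeFactors, ((p ^ d.factorization p : ℕ) : R) ∣ x) : (d : R) ∣ x := by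
  rw [Nat.prod_primeFactors_pow_factorization hd, Nat.cast_prod]
  refine Finset.prod_dvd_of_coprime (fun p hp p' hp' hne => ?_) h
  exact (Nat.coprime_pow_primes _ _ (Nat.prime_of_mem_primeFactors hp)
    (Nat.prime_of_mem_primeFactors hp') hne).cast

theorem IsPrimitiveRoot.natCast_dvd_aeval_pow {R : Type*} [CommRing R] [IsDomain R] [CharZero R]
    {n d : ℕ} {ζ : R} (hζ : IsPrimitiveRoot ζ n) (hn : 0 < n) (hd : d ∣ n) {f : ℤ[X]}
    (hf : ∀ q m : ℕ, q.Prime → 1 ≤ m → q ^ m ∣ d → aeval (ζ ^ (d / q ^ m)) f = 0) :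
    (d : R) ∣ aeval (ζ ^ d) f := by
  have hd0 : d ≠ 0 := (Nat.pos_of_dvd_of_pos hd hn).ne'
  refine Nat.cast_dvd_of_forall_pow_factorization_dvd hd0 fun q hqd => ?_
  have hq := Nat.prime_of_mem_primeFactors hqd
  set v := d.factorization q
  obtain ⟨e, hde⟩ : q ^ v ∣ d := Nat.ordProj_dvd d q
  have he0 : e ≠ 0 := by rintro rfl; exact hd0 (by simpa using hde)
  obtain ⟨N, hnN⟩ : e ∣ n := (Dvd.intro_left _ hde.symm).trans hd
  have hμ : IsPrimitiveRoot (ζ ^ e) N := hζ.pow hn hnN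
  have hvN : q ^ v ∣ N := by
    rw [← Nat.mul_dvd_mul_iff_left (Nat.pos_of_ne_zero he0), ← hnN, mul_comm, ← hde]
    exact hd
  have hvan : ∀ j < v, aeval ((ζ ^ e) ^ q ^ j) f = 0 := fun j hj => by
    have hdj : d = q ^ (v - j) * (e * q ^ j) := by
      rw [hde, mul_comm e, ← mul_assoc, ← pow_add, Nat.sub_add_cancel hj.le]
    have := hf q (v - j) hq (by omega) (Dvd.intro _ hdj.symm)
    rwa [hdj, Nat.mul_div_cancel_left _ (pow_pos hq.pos _), pow_mul] at this
  have := hμ.prime_pow_dvd_aeval_pow_prime_pow (Nat.pos_of_mul_pos_left (hnN ▸ hn)) hq hvN hvan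
  rwa [← pow_mul, mul_comm, ← hde, ← Nat.cast_pow] at this

theorem aeval_X_pow_toNat_emod {K : Type*} [Field K] {n : ℕ} (hn : n ≠ 0) {y : K} (hy : y ^ n = 1)
    (t : ℤ) : aeval y (X ^ (t % n).toNat : ℤ[X]) = y ^ t := by
  have hy0 : y ≠ 0 := by rintro rfl; simp [hn] at hy
  rw [map_pow, aeval_X, ← zpow_natCast, Int.toNat_of_nonneg (Int.emod_nonneg t (by exact_mod_cast hn))]
  conv_rhs => rw [← Int.mul_ediv_add_emod t n]
  rw [zpow_add₀ hy0, zpow_mul, zpow_natCast, hy, one_zpow, one_mul]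

theorem exists_aeval_eq_sum_zpow_add_zpow_neg {K : Type*} [Field K] {n : ℕ} (hn : n ≠ 0)
    (Γ : Finset ℤ) (a : ℤ → ℤ) : ∃ P : ℤ[X], ∀ y : K, y ^ n = 1 →
      aeval y P = ∑ x ∈ Γ, (a x : K) * (y ^ x + y ^ (-x)) - (y + y⁻¹) := by
  let mono : ℤ → ℤ[X] := fun t => X ^ (t % n).toNat
  refine ⟨∑ x ∈ Γ, C (a x) * (mono x + mono (-x)) - (mono 1 + mono (-1)), fun y hy => ?_⟩
  simp [mono, aeval_X_pow_toNat_emod hn hy]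

theorem exists_add_mul_of_mem_adjoin_singleton {K : Type*} [Field K] {ζ : K} (hζ : ζ ≠ 0) {x : K}
    (hx : x ∈ Algebra.adjoin ℤ {ζ}) :
    ∃ s ∈ Algebra.adjoin ℤ {ζ + ζ⁻¹}, ∃ t ∈ Algebra.adjoin ℤ {ζ + ζ⁻¹}, x = s + ζ * t := by
  have hgen : ζ + ζ⁻¹ ∈ Algebra.adjoin ℤ {ζ + ζ⁻¹} := Algebra.self_mem_adjoin_singleton ℤ _
  induction hx using Algebra.adjoin_induction with
  | mem x hx =>
    obtain rfl := Set.mem_singleton_iff.mp hx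
    exact ⟨0, zero_mem _, 1, one_mem _, by ring⟩
  | algebraMap r => exact ⟨algebraMap ℤ K r, Subalgebra.algebraMap_mem _ r, 0, zero_mem _, by ring⟩
  | add x y _ _ ihx ihy =>
    obtain ⟨s₁, hs₁, t₁, ht₁, rfl⟩ := ihx
    obtain ⟨s₂, hs₂, t₂, ht₂, rfl⟩ := ihy
    exact ⟨s₁ + s₂, add_mem hs₁ hs₂, t₁ + t₂, add_mem ht₁ ht₂, by ring⟩
  | mul x y _ _ ihx ihy =>
    obtain ⟨s₁, hs₁, t₁, ht₁, rfl⟩ := ihx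
    obtain ⟨s₂, hs₂, t₂, ht₂, rfl⟩ := ihy
    -- `ζ² = (ζ + ζ⁻¹) ζ - 1`
    refine ⟨s₁ * s₂ - t₁ * t₂, sub_mem (mul_mem hs₁ hs₂) (mul_mem ht₁ ht₂),
      s₁ * t₂ + t₁ * s₂ + (ζ + ζ⁻¹) * (t₁ * t₂),
      add_mem (add_mem (mul_mem hs₁ ht₂) (mul_mem ht₁ hs₂)) (mul_mem hgen (mul_mem ht₁ ht₂)), ?_⟩
    linear_combination (-(t₁ * t₂)) * mul_inv_cancel₀ hζ

theorem Complex.conj_eq_of_mem_adjoin_add_inv {ζ : ℂ} (hζ : conj ζ = ζ⁻¹) {s : ℂ}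
    (hs : s ∈ Algebra.adjoin ℤ {ζ + ζ⁻¹}) : conj s = s := by
  induction hs using Algebra.adjoin_induction with
  | mem x hx =>
    obtain rfl := Set.mem_singleton_iff.mp hx
    rw [map_add, map_inv₀, hζ, inv_inv, add_comm]
  | algebraMap r => simp
  | add x y _ _ ihx ihy => rw [map_add, ihx, ihy]
  | mul x y _ _ ihx ihy => rw [map_mul, ihx, ihy]

theorem Complex.mem_adjoin_add_inv_of_conj_eq {ζ : ℂ} (hζ : ‖ζ‖ = 1) {x : ℂ}
    (hx : x ∈ Algebra.adjoin ℤ {ζ}) (hconj : conj x = x) : x ∈ Algebra.adjoin ℤ {ζ + ζ⁻¹} := by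
  have hζ0 : ζ ≠ 0 := by rintro rfl; simp at hζ
  have hconjζ : conj ζ = ζ⁻¹ := (inv_eq_conj hζ).symm
  obtain ⟨s, hs, t, ht, rfl⟩ := exists_add_mul_of_mem_adjoin_singleton hζ0 hx
  refine add_mem hs ?_
  rcases eq_or_ne t 0 with rfl | ht0
  · simp
  rw [map_add, map_mul, conj_eq_of_mem_adjoin_add_inv hconjζ hs,
    conj_eq_of_mem_adjoin_add_inv hconjζ ht, hconjζ, add_right_inj] at hconj
  have hζsq : ζ * ζ = 1 := by
    nth_rw 1 [← mul_right_cancel₀ ht0 hconj]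
    exact inv_mul_cancel₀ hζ0
  rcases mul_self_eq_one_iff.mp hζsq with rfl | rfl
  · simpa using ht
  · simpa using neg_mem ht

theorem Complex.conj_zpow_add_zpow_neg {ζ : ℂ} (hζ : conj ζ = ζ⁻¹) (k : ℤ) :
    conj (ζ ^ k + ζ ^ (-k)) = ζ ^ k + ζ ^ (-k) := by
  rw [map_add, map_zpow₀, map_zpow₀, hζ, inv_zpow', inv_zpow', neg_neg, add_comm]

theorem lambda_sub_alpha_mem_general (p f : ℕ) [Fact p.Prime]
    (n : ℕ) (hn : 1 < n)
    (u : (MonoidAlgebra ℤ (Matrix.ProjectiveSpecialLinearGroup (Fin 2) (GaloisField p f)))ˣ)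
    (g₀ : Matrix.ProjectiveSpecialLinearGroup (Fin 2) (GaloisField p f))
    (ζ : ℂ) (hζ : IsPrimitiveRoot ζ n)
    (Γ : Finset ℤ)
    (lam alpha : ℤ → ℂ)
    (hlam : ∀ i : ℤ, lam i =
      ∑ x ∈ Γ,
        ((partialAug (↑u) (g₀ ^ x) : ℤ) : ℂ) * (ζ ^ (i * x) + ζ ^ (-(i * x))))
    (halpha : ∀ i : ℤ, alpha i = ζ ^ i + ζ ^ (-i))
    (d : ℕ) (hd : d ∣ n)
    (hvan : ∀ q' m : ℕ, q'.Prime → 1 ≤ m → q' ^ m ∣ d →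
      lam ((d / q' ^ m : ℕ) : ℤ) = alpha ((d / q' ^ m : ℕ) : ℤ)) :
    ∃ r ∈ Algebra.adjoin ℤ ({ζ + ζ⁻¹} : Set ℂ),
      lam (d : ℤ) - alpha (d : ℤ) = (d : ℂ) * r := by
  let ℤζ := Algebra.adjoin ℤ ({ζ} : Set ℂ)
  let ζ' : ℤζ := ⟨ζ, Algebra.self_mem_adjoin_singleton ℤ ζ⟩
  have hζ' : IsPrimitiveRoot ζ' n := IsPrimitiveRoot.coe_submonoidClass_iff.mp hζ
  obtain ⟨P, hP⟩ := exists_aeval_eq_sum_zpow_add_zpow_neg (K := ℂ) (n := n) (by omega) Γ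
    fun x => partialAug (↑u) (g₀ ^ x)
  have heval : ∀ c : ℕ, (aeval (ζ' ^ c) P : ℂ) = lam c - alpha c := fun c => by
    rw [aeval_subalgebra_coe, SubmonoidClass.coe_pow, hP _ (by rw [pow_right_comm, hζ.pow_eq_one, one_pow]),
      hlam, halpha]
    simp only [zpow_mul, zpow_natCast, zpow_neg]
    rfl
  obtain ⟨r, hr⟩ := hζ'.natCast_dvd_aeval_pow (by omega) hd (f := P) fun q m hq hm hqm =>
    Subtype.val_injective <| by rw [heval, hvan q m hq hm hqm, sub_self]; rfl
  have hdr : lam d - alpha d = d * r := by rw [← heval, hr]; rfl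
  have hnorm : ‖ζ‖ = 1 := hζ.norm'_eq_one (by omega)
  have hconjζ : conj ζ = ζ⁻¹ := (Complex.inv_eq_conj hnorm).symm
  have hreal : conj (lam d - alpha d) = lam d - alpha d := by
    simp only [hlam, halpha, map_sub, map_sum, map_mul, map_intCast,
      Complex.conj_zpow_add_zpow_neg hconjζ]
  rw [hdr, map_mul, map_natCast] at hreal
  refine ⟨r, Complex.mem_adjoin_add_inv_of_conj_eq hnorm r.2 ?_, hdr⟩
  exact mul_left_cancel₀ (Nat.cast_ne_zero.mpr (Nat.pos_of_dvd_of_pos hd (by omega)).ne') hreal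

/-- **Key congruence.** Let `G = PSL(2,q)`, `q = p^f`, let `n > 1` with
`gcd(n, 2q) = 1` and `n` not a prime power, let `u` be a normalized unit of order
`n` in `ℤG`, `g₀ ∈ G` of order `n`, `ζ` a primitive `n`-th complex root of unity
and `Γ` a set of representatives of `x ≡ ±y (mod n)` on `ℤ`.  With
`ε_x = ε_{g₀^x}(u)`, `λ_i = Σ_{x∈Γ} ε_x (ζ^{ix} + ζ^{−ix})` and
`α_i = ζ^i + ζ^{−i}`, if `d ∣ n` and `λ_{d/q'} = α_{d/q'}` for every prime power
`q' ≠ 1` dividing `d`, then `λ_d − α_d ∈ d·ℤ[ζ + ζ^{−1}]`. -/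
theorem lambda_sub_alpha_mem (p f : ℕ) [Fact p.Prime] (hf : 0 < f)
    (n : ℕ) (hn : 1 < n) (hcop : Nat.gcd n (2 * p ^ f) = 1)
    (hnpp : ¬ IsPrimePow n)
    (u : (MonoidAlgebra ℤ (Matrix.ProjectiveSpecialLinearGroup (Fin 2) (GaloisField p f)))ˣ)
    (haug : aug (↑u : MonoidAlgebra ℤ (Matrix.ProjectiveSpecialLinearGroup (Fin 2) (GaloisField p f))) = 1)
    (hord : orderOf u = n)
    (g₀ : Matrix.ProjectiveSpecialLinearGroup (Fin 2) (GaloisField p f))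
    (hg₀ : orderOf g₀ = n)
    (ζ : ℂ) (hζ : IsPrimitiveRoot ζ n)
    (Γ : Finset ℤ)
    (hΓ : ∀ y : ℤ, ∃! x, x ∈ Γ ∧ (x ≡ y [ZMOD n] ∨ x ≡ -y [ZMOD n]))
    (lam alpha : ℤ → ℂ)
    (hlam : ∀ i : ℤ, lam i =
      ∑ x ∈ Γ,
        ((partialAug (↑u) (g₀ ^ x) : ℤ) : ℂ) * (ζ ^ (i * x) + ζ ^ (-(i * x))))
    (halpha : ∀ i : ℤ, alpha i = ζ ^ i + ζ ^ (-i))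
    (d : ℕ) (hd : d ∣ n)
    (hvan : ∀ q' m : ℕ, q'.Prime → 1 ≤ m → q' ^ m ∣ d →
      lam ((d / q' ^ m : ℕ) : ℤ) = alpha ((d / q' ^ m : ℕ) : ℤ)) :
    ∃ r ∈ Algebra.adjoin ℤ ({ζ + ζ⁻¹} : Set ℂ),
      lam (d : ℤ) - alpha (d : ℤ) = (d : ℂ) * r :=
  lambda_sub_alpha_mem_general p f n hn u g₀ ζ hζ Γ lam alpha hlam halpha d hd hvan
end
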